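/- arXiv:2302.08561 — 2 statements merged into one kernel-verified Lean document; each statement's English description precedes it below -/
import Mathlib

section
/- Let N, E, T be positive integers, B₁ : Matrix (Fin N) (Fin E) ℝ and B₂ : Matrix (Fin E) (Fin T) ℝ matrices with B₁ * B₂ = 0, and G₀, G₁, G₂ diagonal matrices with strictly positive diagonal entries. Let L₁ = B₁ᵀ * G₀ * B₁ * G₁⁻¹ + G₁ * B₂ * G₂⁻¹ * B₂ᵀ. Then ℝ^E is the internal direct sum of the three subspaces range((B₁ᵀ).mulVecLin), ker(L₁.mulVecLin), and range((G₁ * B₂ * G₂⁻¹).mulVecLin): these subspaces are pairwise disjoint (pairwise trivial intersection, indeed independent) and their sum is all of ℝ^E. (Weighted Hodge decomposition, equation (15) of the paper.) -/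
open Matrix

section Aux

variable {n : Type*} [Fintype n] [DecidableEq n]

lemma diag_quad_nonneg (g : n → ℝ) (hg : ∀ i, 0 < g i) (v : n → ℝ) :
    0 ≤ v ⬝ᵥ (Matrix.diagonal g *ᵥ v) := by
  rw [dotProduct]
  refine Finset.sum_nonneg fun i _ => ?_
  rw [mulVec_diagonal]
  nlinarith [(hg i).le, sq_nonneg (v i)]

lemma diag_quad_eq_zero {g : n → ℝ} (hg : ∀ i, 0 < g i) {v : n → ℝ}
    (h : v ⬝ᵥ (Matrix.diagonal g *ᵥ v) = 0) : v = 0 := by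
  rw [dotProduct] at h
  rw [Finset.sum_eq_zero_iff_of_nonneg (fun i _ => by
    rw [mulVec_diagonal]; nlinarith [(hg i).le, sq_nonneg (v i)])] at h
  funext i
  have h2 := h i (Finset.mem_univ i)
  rw [mulVec_diagonal] at h2
  have hgi := hg i
  show v i = 0
  rw [mul_comm (g i) (v i), ← mul_assoc] at h2
  rcases mul_eq_zero.mp h2 with h3 | h3
  · exact mul_self_eq_zero.mp h3
  · exact absurd h3 (ne_of_gt hgi)

lemma inv_diag (g : n → ℝ) (hg : ∀ i, 0 < g i) :
    (Matrix.diagonal g)⁻¹ = Matrix.diagonal (fun i => (g i)⁻¹) := by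
  apply Matrix.inv_eq_right_inv
  rw [Matrix.diagonal_mul_diagonal]
  convert Matrix.diagonal_one with i
  exact mul_inv_cancel₀ (ne_of_gt (hg i))

end Aux

/-- Weighted Hodge decomposition (equation (15) of the paper):
`ℝ^E` is the internal direct sum of the irrotational subspace `im(B₁ᵀ)`,
the harmonic subspace `ker(L₁)`, and the solenoidal subspace
`im(G₁ B₂ G₂⁻¹)`, where
`L₁ = B₁ᵀ G₀ B₁ G₁⁻¹ + G₁ B₂ G₂⁻¹ B₂ᵀ`. -/
theorem weighted_hodge_decomposition (N E T : ℕ)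
    (hN : 0 < N) (hE : 0 < E) (hT : 0 < T)
    (B₁ : Matrix (Fin N) (Fin E) ℝ) (B₂ : Matrix (Fin E) (Fin T) ℝ)
    (hB : B₁ * B₂ = 0)
    (g₀ : Fin N → ℝ) (hg₀ : ∀ i, 0 < g₀ i)
    (g₁ : Fin E → ℝ) (hg₁ : ∀ i, 0 < g₁ i)
    (g₂ : Fin T → ℝ) (hg₂ : ∀ i, 0 < g₂ i) :
    DirectSum.IsInternal
      (![LinearMap.range (B₁ᵀ).mulVecLin,
        LinearMap.ker (B₁ᵀ * Matrix.diagonal g₀ * B₁ * (Matrix.diagonal g₁)⁻¹ +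
          Matrix.diagonal g₁ * B₂ * (Matrix.diagonal g₂)⁻¹ * B₂ᵀ).mulVecLin,
        LinearMap.range
          (Matrix.diagonal g₁ * B₂ * (Matrix.diagonal g₂)⁻¹).mulVecLin] :
        Fin 3 → Submodule ℝ (Fin E → ℝ)) := by
  classical
  have hG₁ : (Matrix.diagonal g₁)⁻¹ = Matrix.diagonal (fun i => (g₁ i)⁻¹) := inv_diag g₁ hg₁
  have hG₂ : (Matrix.diagonal g₂)⁻¹ = Matrix.diagonal (fun i => (g₂ i)⁻¹) := inv_diag g₂ hg₂
  set d₁ : Fin E → ℝ := fun i => (g₁ i)⁻¹ with hd₁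
  set d₂ : Fin T → ℝ := fun i => (g₂ i)⁻¹ with hd₂
  have hd₁pos : ∀ i, 0 < d₁ i := fun i => inv_pos.mpr (hg₁ i)
  have hd₂pos : ∀ i, 0 < d₂ i := fun i => inv_pos.mpr (hg₂ i)
  set D₁ := Matrix.diagonal d₁ with hD₁
  set D₂ := Matrix.diagonal d₂ with hD₂
  set G := Matrix.diagonal g₁ * B₂ * (Matrix.diagonal g₂)⁻¹ with hGdef
  set L := B₁ᵀ * Matrix.diagonal g₀ * B₁ * (Matrix.diagonal g₁)⁻¹ + G * B₂ᵀ with hLdef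
  set V₁ := LinearMap.range (B₁ᵀ).mulVecLin with hV₁
  set VH := LinearMap.ker L.mulVecLin with hVH
  set V₃ := LinearMap.range G.mulVecLin with hV₃
  -- basic cancellation
  have hcancel : D₁ * Matrix.diagonal g₁ = 1 := by
    rw [hD₁, Matrix.diagonal_mul_diagonal]
    convert Matrix.diagonal_one with i
    exact inv_mul_cancel₀ (ne_of_gt (hg₁ i))
  have hGmv : ∀ v : Fin T → ℝ, D₁ *ᵥ (G *ᵥ v) = (B₂ * D₂) *ᵥ v := by
    intro v
    rw [hGdef, hG₂, Matrix.mulVec_mulVec, ← Matrix.mul_assoc, ← Matrix.mul_assoc, hcancel,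
      Matrix.one_mul]
  -- symmetry of the weighted form
  have hsymm : ∀ x y : Fin E → ℝ, x ⬝ᵥ (D₁ *ᵥ y) = y ⬝ᵥ (D₁ *ᵥ x) := by
    intro x y
    simp only [dotProduct, hD₁, mulVec_diagonal]
    exact Finset.sum_congr rfl fun i _ => by ring
  -- orthogonality of V₁ and V₃
  have hO13 : ∀ (u : Fin N → ℝ) (v : Fin T → ℝ),
      (B₁ᵀ *ᵥ u) ⬝ᵥ (D₁ *ᵥ (G *ᵥ v)) = 0 := by
    intro u v
    rw [hGmv, Matrix.mulVec_transpose, ← dotProduct_mulVec, Matrix.mulVec_mulVec,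
      ← Matrix.mul_assoc, hB, Matrix.zero_mul, Matrix.zero_mulVec, dotProduct_zero]
  -- kernel characterization
  have hker : ∀ x : Fin E → ℝ, L *ᵥ x = 0 → B₁ *ᵥ (D₁ *ᵥ x) = 0 ∧ B₂ᵀ *ᵥ x = 0 := by
    intro x hx
    have hLx : L *ᵥ x = B₁ᵀ *ᵥ (Matrix.diagonal g₀ *ᵥ (B₁ *ᵥ (D₁ *ᵥ x))) +
        Matrix.diagonal g₁ *ᵥ (B₂ *ᵥ (D₂ *ᵥ (B₂ᵀ *ᵥ x))) := by
      rw [hLdef, hGdef, Matrix.add_mulVec, hG₁, hG₂]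
      simp only [← Matrix.mulVec_mulVec]
    have hxg : (D₁ *ᵥ x) ᵥ* Matrix.diagonal g₁ = x := by
      funext i
      rw [vecMul_diagonal, hD₁, mulVec_diagonal]
      simp only [hd₁]
      rw [mul_comm ((g₁ i)⁻¹) (x i), mul_assoc, inv_mul_cancel₀ (ne_of_gt (hg₁ i)), mul_one]
    have hq : (D₁ *ᵥ x) ⬝ᵥ (L *ᵥ x) =
        (B₁ *ᵥ (D₁ *ᵥ x)) ⬝ᵥ (Matrix.diagonal g₀ *ᵥ (B₁ *ᵥ (D₁ *ᵥ x))) +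
        (B₂ᵀ *ᵥ x) ⬝ᵥ (D₂ *ᵥ (B₂ᵀ *ᵥ x)) := by
      rw [hLx, dotProduct_add]
      congr 1
      · rw [dotProduct_mulVec, vecMul_transpose]
      · rw [dotProduct_mulVec, hxg, dotProduct_mulVec, ← Matrix.mulVec_transpose]
    rw [hx, dotProduct_zero] at hq
    have h1 := diag_quad_nonneg g₀ hg₀ (B₁ *ᵥ (D₁ *ᵥ x))
    have h2 := diag_quad_nonneg d₂ hd₂pos (B₂ᵀ *ᵥ x)
    exact ⟨diag_quad_eq_zero hg₀ (by linarith), diag_quad_eq_zero hd₂pos (by linarith)⟩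
  -- orthogonality of ker with V₁ and V₃
  have hOH1 : ∀ x : Fin E → ℝ, L *ᵥ x = 0 → ∀ u, x ⬝ᵥ (D₁ *ᵥ (B₁ᵀ *ᵥ u)) = 0 := by
    intro x hx u
    rw [hsymm, Matrix.mulVec_transpose, ← dotProduct_mulVec, (hker x hx).1, dotProduct_zero]
  have hOH3 : ∀ x : Fin E → ℝ, L *ᵥ x = 0 → ∀ v, x ⬝ᵥ (D₁ *ᵥ (G *ᵥ v)) = 0 := by
    intro x hx v
    rw [hGmv, dotProduct_mulVec, ← Matrix.vecMul_vecMul, ← Matrix.mulVec_transpose B₂ x,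
      (hker x hx).2, Matrix.zero_vecMul, zero_dotProduct]
  -- disjointness statements
  have hzero : ∀ x : Fin E → ℝ, x ⬝ᵥ (D₁ *ᵥ x) = 0 → x = 0 := fun x h =>
    diag_quad_eq_zero hd₁pos h
  have hd1 : Disjoint V₁ (VH ⊔ V₃) := by
    rw [Submodule.disjoint_def]
    intro x hx1 hx23
    obtain ⟨u, rfl⟩ := LinearMap.mem_range.mp hx1
    obtain ⟨p, hp, q, hq, hpq⟩ := Submodule.mem_sup.mp hx23
    obtain ⟨v, rfl⟩ := LinearMap.mem_range.mp hq
    have hpker : L *ᵥ p = 0 := LinearMap.mem_ker.mp hp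
    apply hzero
    have : (B₁ᵀ).mulVecLin u = p + G.mulVecLin v := hpq.symm
    rw [Matrix.mulVecLin_apply] at this ⊢
    rw [Matrix.mulVecLin_apply] at this
    calc (B₁ᵀ *ᵥ u) ⬝ᵥ (D₁ *ᵥ (B₁ᵀ *ᵥ u))
        = (B₁ᵀ *ᵥ u) ⬝ᵥ (D₁ *ᵥ (p + G *ᵥ v)) := by rw [← this]
      _ = (B₁ᵀ *ᵥ u) ⬝ᵥ (D₁ *ᵥ p) + (B₁ᵀ *ᵥ u) ⬝ᵥ (D₁ *ᵥ (G *ᵥ v)) := by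
          rw [Matrix.mulVec_add, dotProduct_add]
      _ = 0 := by
          rw [hO13, hsymm, hOH1 p hpker u, add_zero]
  have hdH : Disjoint VH (V₁ ⊔ V₃) := by
    rw [Submodule.disjoint_def]
    intro x hxH hx13
    have hxker : L *ᵥ x = 0 := LinearMap.mem_ker.mp hxH
    obtain ⟨p, hp, q, hq, hpq⟩ := Submodule.mem_sup.mp hx13
    obtain ⟨u, rfl⟩ := LinearMap.mem_range.mp hp
    obtain ⟨v, rfl⟩ := LinearMap.mem_range.mp hq
    apply hzero
    rw [Matrix.mulVecLin_apply] at hpq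
    rw [Matrix.mulVecLin_apply] at hpq
    calc x ⬝ᵥ (D₁ *ᵥ x)
        = x ⬝ᵥ (D₁ *ᵥ (B₁ᵀ *ᵥ u + G *ᵥ v)) := by rw [hpq]
      _ = x ⬝ᵥ (D₁ *ᵥ (B₁ᵀ *ᵥ u)) + x ⬝ᵥ (D₁ *ᵥ (G *ᵥ v)) := by
          rw [Matrix.mulVec_add, dotProduct_add]
      _ = 0 := by rw [hOH1 x hxker u, hOH3 x hxker v, add_zero]
  have hd3 : Disjoint V₃ (V₁ ⊔ VH) := by
    rw [Submodule.disjoint_def]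
    intro x hx3 hx12
    obtain ⟨v, rfl⟩ := LinearMap.mem_range.mp hx3
    obtain ⟨p, hp, q, hq, hpq⟩ := Submodule.mem_sup.mp hx12
    obtain ⟨u, rfl⟩ := LinearMap.mem_range.mp hp
    have hqker : L *ᵥ q = 0 := LinearMap.mem_ker.mp hq
    apply hzero
    rw [Matrix.mulVecLin_apply] at hpq ⊢
    rw [Matrix.mulVecLin_apply] at hpq
    calc (G *ᵥ v) ⬝ᵥ (D₁ *ᵥ (G *ᵥ v))
        = (G *ᵥ v) ⬝ᵥ (D₁ *ᵥ (B₁ᵀ *ᵥ u + q)) := by rw [hpq]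
      _ = (G *ᵥ v) ⬝ᵥ (D₁ *ᵥ (B₁ᵀ *ᵥ u)) + (G *ᵥ v) ⬝ᵥ (D₁ *ᵥ q) := by
          rw [Matrix.mulVec_add, dotProduct_add]
      _ = 0 := by
          rw [hsymm _ (B₁ᵀ *ᵥ u), hO13 u v, hsymm, hOH3 q hqker v, add_zero]
  -- range of L is contained in V₁ ⊔ V₃
  have him : LinearMap.range L.mulVecLin ≤ V₁ ⊔ V₃ := by
    rintro w ⟨x, rfl⟩
    have hsplit : L.mulVecLin x =
        (B₁ᵀ).mulVecLin ((Matrix.diagonal g₀ * B₁ * (Matrix.diagonal g₁)⁻¹) *ᵥ x) +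
        G.mulVecLin (B₂ᵀ *ᵥ x) := by
      simp only [Matrix.mulVecLin_apply, hLdef, Matrix.add_mulVec, ← Matrix.mulVec_mulVec]
    rw [hsplit]
    exact Submodule.add_mem_sup (LinearMap.mem_range_self _ _) (LinearMap.mem_range_self _ _)
  -- assemble
  rw [DirectSum.isInternal_submodule_iff_iSupIndep_and_iSup_eq_top]
  constructor
  · rw [iSupIndep_def]
    intro i
    fin_cases i
    · refine hd1.mono_right ?_
      refine iSup_le fun j => iSup_le fun hj => ?_
      fin_cases j
      · exact absurd rfl hj
      · exact le_sup_left
      · exact le_sup_right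
    · refine hdH.mono_right ?_
      refine iSup_le fun j => iSup_le fun hj => ?_
      fin_cases j
      · exact le_sup_left
      · exact absurd rfl hj
      · exact le_sup_right
    · refine hd3.mono_right ?_
      refine iSup_le fun j => iSup_le fun hj => ?_
      fin_cases j
      · exact le_sup_left
      · exact le_sup_right
      · exact absurd rfl hj
  · apply le_antisymm le_top
    have h4 : VH ⊔ LinearMap.range L.mulVecLin = ⊤ :=
      Submodule.eq_top_of_disjoint _ _
        (by rw [add_comm]; exact (LinearMap.finrank_range_add_finrank_ker L.mulVecLin).ge)
        (hdH.mono_right him)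
    rw [← h4]
    apply sup_le
    · exact le_iSup (fun j => (![V₁, VH, V₃] : Fin 3 → Submodule ℝ (Fin E → ℝ)) j) 1
    · exact him.trans (sup_le
        (le_iSup (fun j => (![V₁, VH, V₃] : Fin 3 → Submodule ℝ (Fin E → ℝ)) j) 0)
        (le_iSup (fun j => (![V₁, VH, V₃] : Fin 3 → Submodule ℝ (Fin E → ℝ)) j) 2))
end

section
/- Let N, E, T be positive integers, B₁ : Matrix (Fin N) (Fin E) ℝ and B₂ : Matrix (Fin E) (Fin T) ℝ matrices with B₁ * B₂ = 0, and G₀, G₁, G₂ diagonal matrices with strictly positive diagonal entries. Then every edge signal x ∈ ℝ^E can be written as x = B₁ᵀ *ᵥ x⁰ + (G₁ * B₂ * G₂⁻¹) *ᵥ x² + x_h for some x⁰ ∈ ℝ^N, x² ∈ ℝ^T, and x_h ∈ ℝ^E with (B₁ᵀ * G₀ * B₁ * G₁⁻¹ + G₁ * B₂ * G₂⁻¹ * B₂ᵀ) *ᵥ x_h = 0. Moreover the three summands B₁ᵀ *ᵥ x⁰, (G₁ * B₂ * G₂⁻¹) *ᵥ x², and x_h are uniquely determined by x. (Signal-level Hodge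 decomposition, equation (16) of the paper.) -/
open Matrix

section Aux

private lemma exists_normal {E k : ℕ} (Q : Matrix (Fin E) (Fin k) ℝ) (z : Fin E → ℝ) :
    ∃ a, (Qᵀ * Q) *ᵥ a = Qᵀ *ᵥ z := by
  have hle : LinearMap.range (Qᵀ * Q).mulVecLin ≤ LinearMap.range Qᵀ.mulVecLin := by
    rintro _ ⟨a, rfl⟩
    exact ⟨Q *ᵥ a, by simp [Matrix.mulVecLin_apply]⟩
  have hrank : (Qᵀ * Q).rank = Qᵀ.rank := by
    rw [Matrix.rank_transpose_mul_self, Matrix.rank_transpose]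
  have heq : LinearMap.range (Qᵀ * Q).mulVecLin = LinearMap.range Qᵀ.mulVecLin :=
    Submodule.eq_of_le_of_finrank_eq hle hrank
  have hmem : Qᵀ *ᵥ z ∈ LinearMap.range (Qᵀ * Q).mulVecLin := by
    rw [heq]; exact ⟨z, rfl⟩
  obtain ⟨a, ha⟩ := hmem
  exact ⟨a, ha⟩

private lemma exists_normalW {E k : ℕ} (A : Matrix (Fin E) (Fin k) ℝ) (g : Fin E → ℝ)
    (hg : ∀ i, 0 < g i) (x : Fin E → ℝ) :
    ∃ a, (Aᵀ * Matrix.diagonal g * A) *ᵥ a = (Aᵀ * Matrix.diagonal g) *ᵥ x := by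
  set s : Fin E → ℝ := fun i => Real.sqrt (g i) with hs_def
  have hs : Matrix.diagonal s * Matrix.diagonal s = Matrix.diagonal g := by
    rw [Matrix.diagonal_mul_diagonal]
    exact congrArg Matrix.diagonal (funext fun i => Real.mul_self_sqrt (hg i).le)
  obtain ⟨a, ha⟩ := exists_normal (Matrix.diagonal s * A) (Matrix.diagonal s *ᵥ x)
  refine ⟨a, ?_⟩
  have h1 : (Matrix.diagonal s * A)ᵀ * (Matrix.diagonal s * A) = Aᵀ * Matrix.diagonal g * A := by
    rw [Matrix.transpose_mul, Matrix.diagonal_transpose]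
    rw [show Aᵀ * Matrix.diagonal s * (Matrix.diagonal s * A)
        = Aᵀ * (Matrix.diagonal s * Matrix.diagonal s) * A by
      simp only [Matrix.mul_assoc], hs]
  have h2 : (Matrix.diagonal s * A)ᵀ *ᵥ (Matrix.diagonal s *ᵥ x)
      = (Aᵀ * Matrix.diagonal g) *ᵥ x := by
    rw [Matrix.transpose_mul, Matrix.diagonal_transpose, Matrix.mulVec_mulVec,
      Matrix.mul_assoc, hs]
  rw [← h1, ← h2]
  exact ha

private lemma dot_diag_nonneg {n : ℕ} {d : Fin n → ℝ} (hd : ∀ i, 0 ≤ d i) (v : Fin n → ℝ) :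
    0 ≤ v ⬝ᵥ (Matrix.diagonal d *ᵥ v) := by
  unfold dotProduct
  apply Finset.sum_nonneg
  intro i _
  rw [Matrix.mulVec_diagonal]
  nlinarith [hd i, mul_self_nonneg (v i)]

private lemma dot_diag_eq_zero {n : ℕ} {d : Fin n → ℝ} (hd : ∀ i, 0 < d i) {v : Fin n → ℝ}
    (h : v ⬝ᵥ (Matrix.diagonal d *ᵥ v) = 0) : v = 0 := by
  funext i
  have hterm : ∀ j ∈ Finset.univ, (0:ℝ) ≤ v j * (Matrix.diagonal d *ᵥ v) j := by
    intro j _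
    rw [Matrix.mulVec_diagonal]
    nlinarith [(hd j).le, mul_self_nonneg (v j)]
  unfold dotProduct at h
  have h3 := (Finset.sum_eq_zero_iff_of_nonneg hterm).mp h i (Finset.mem_univ i)
  rw [Matrix.mulVec_diagonal] at h3
  have h4 : d i * (v i * v i) = 0 := by rw [← h3]; ring
  have h5 : v i * v i = 0 := (mul_eq_zero.mp h4).resolve_left (hd i).ne'
  simpa using mul_self_eq_zero.mp h5

private lemma dot_diag_comm {n : ℕ} (d u v : Fin n → ℝ) :
    u ⬝ᵥ (Matrix.diagonal d *ᵥ v) = v ⬝ᵥ (Matrix.diagonal d *ᵥ u) := by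
  unfold dotProduct
  refine Finset.sum_congr rfl fun i _ => ?_
  rw [Matrix.mulVec_diagonal, Matrix.mulVec_diagonal]
  ring

private lemma dot_mulVec_left {m n : ℕ} (A : Matrix (Fin m) (Fin n) ℝ) (d : Fin n → ℝ)
    (w : Fin m → ℝ) : (A *ᵥ d) ⬝ᵥ w = d ⬝ᵥ (Aᵀ *ᵥ w) := by
  rw [Matrix.dotProduct_mulVec d Aᵀ w, Matrix.vecMul_transpose]

private lemma dot_sandwich {m n : ℕ} (M : Matrix (Fin m) (Fin n) ℝ)
    (D : Matrix (Fin m) (Fin m) ℝ) (h : Fin n → ℝ) :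
    h ⬝ᵥ ((Mᵀ * D * M) *ᵥ h) = (M *ᵥ h) ⬝ᵥ (D *ᵥ (M *ᵥ h)) := by
  rw [← Matrix.mulVec_mulVec, ← Matrix.mulVec_mulVec, Matrix.dotProduct_mulVec,
    Matrix.vecMul_transpose]

end Aux

/-- Signal-level Hodge decomposition (equation (16) of the paper): every edge
signal `x ∈ ℝ^E` decomposes as `x = B₁ᵀ x⁰ + G₁ B₂ G₂⁻¹ x² + x_h` with
`x_h ∈ ker L₁`, and the three summands are uniquely determined by `x`. -/
theorem signal_hodge_decomposition (N E T : ℕ)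
    (hN : 0 < N) (hE : 0 < E) (hT : 0 < T)
    (B₁ : Matrix (Fin N) (Fin E) ℝ) (B₂ : Matrix (Fin E) (Fin T) ℝ)
    (hB : B₁ * B₂ = 0)
    (g₀ : Fin N → ℝ) (hg₀ : ∀ i, 0 < g₀ i)
    (g₁ : Fin E → ℝ) (hg₁ : ∀ i, 0 < g₁ i)
    (g₂ : Fin T → ℝ) (hg₂ : ∀ i, 0 < g₂ i) :
    ∀ x : Fin E → ℝ,
      ∃ (x0 : Fin N → ℝ) (x2 : Fin T → ℝ) (xh : Fin E → ℝ),
        (B₁ᵀ * Matrix.diagonal g₀ * B₁ * (Matrix.diagonal g₁)⁻¹ +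
          Matrix.diagonal g₁ * B₂ * (Matrix.diagonal g₂)⁻¹ * B₂ᵀ) *ᵥ xh = 0 ∧
        x = B₁ᵀ *ᵥ x0 +
          (Matrix.diagonal g₁ * B₂ * (Matrix.diagonal g₂)⁻¹) *ᵥ x2 + xh ∧
        ∀ (y0 : Fin N → ℝ) (y2 : Fin T → ℝ) (yh : Fin E → ℝ),
          (B₁ᵀ * Matrix.diagonal g₀ * B₁ * (Matrix.diagonal g₁)⁻¹ +
            Matrix.diagonal g₁ * B₂ * (Matrix.diagonal g₂)⁻¹ * B₂ᵀ) *ᵥ yh = 0 →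
          x = B₁ᵀ *ᵥ y0 +
            (Matrix.diagonal g₁ * B₂ * (Matrix.diagonal g₂)⁻¹) *ᵥ y2 + yh →
          B₁ᵀ *ᵥ y0 = B₁ᵀ *ᵥ x0 ∧
            (Matrix.diagonal g₁ * B₂ * (Matrix.diagonal g₂)⁻¹) *ᵥ y2 =
              (Matrix.diagonal g₁ * B₂ * (Matrix.diagonal g₂)⁻¹) *ᵥ x2 ∧
            yh = xh := by
  intro x
  -- rewrite the matrix inverses as explicit diagonal matrices
  have hg₁' : ∀ i, (0:ℝ) < (g₁ i)⁻¹ := fun i => inv_pos.mpr (hg₁ i)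
  have hg₂' : ∀ i, (0:ℝ) < (g₂ i)⁻¹ := fun i => inv_pos.mpr (hg₂ i)
  have h₁ : (Matrix.diagonal g₁)⁻¹ = Matrix.diagonal (fun i => (g₁ i)⁻¹) := by
    apply Matrix.inv_eq_right_inv
    rw [Matrix.diagonal_mul_diagonal, ← Matrix.diagonal_one]
    exact congrArg Matrix.diagonal (funext fun i => mul_inv_cancel₀ (hg₁ i).ne')
  have h₂ : (Matrix.diagonal g₂)⁻¹ = Matrix.diagonal (fun i => (g₂ i)⁻¹) := by
    apply Matrix.inv_eq_right_inv
    rw [Matrix.diagonal_mul_diagonal, ← Matrix.diagonal_one]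
    exact congrArg Matrix.diagonal (funext fun i => mul_inv_cancel₀ (hg₂ i).ne')
  rw [h₁, h₂]
  set W₁ : Matrix (Fin E) (Fin E) ℝ := Matrix.diagonal (fun i => (g₁ i)⁻¹) with hW₁
  set W₂ : Matrix (Fin T) (Fin T) ℝ := Matrix.diagonal (fun i => (g₂ i)⁻¹) with hW₂
  set C : Matrix (Fin E) (Fin T) ℝ := Matrix.diagonal g₁ * B₂ * W₂ with hCdef
  -- basic diagonal identities
  have hWG : W₁ * Matrix.diagonal g₁ = 1 := by
    rw [hW₁, Matrix.diagonal_mul_diagonal, ← Matrix.diagonal_one]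
    exact congrArg Matrix.diagonal (funext fun i => inv_mul_cancel₀ (hg₁ i).ne')
  have hGW : Matrix.diagonal g₁ * W₁ = 1 := by
    rw [hW₁, Matrix.diagonal_mul_diagonal, ← Matrix.diagonal_one]
    exact congrArg Matrix.diagonal (funext fun i => mul_inv_cancel₀ (hg₁ i).ne')
  have hW₁T : W₁ᵀ = W₁ := by rw [hW₁, Matrix.diagonal_transpose]
  have hW₂T : W₂ᵀ = W₂ := by rw [hW₂, Matrix.diagonal_transpose]
  -- orthogonality of the two ranges: B₁ * W₁ * C = 0
  have hAWC : B₁ * W₁ * C = 0 := by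
    rw [hCdef]
    simp only [← Matrix.mul_assoc]
    have e1 : B₁ * W₁ * Matrix.diagonal g₁ = B₁ := by
      rw [Matrix.mul_assoc, hWG, Matrix.mul_one]
    rw [e1, hB, Matrix.zero_mul]
  -- Cᵀ * W₁ = W₂ * B₂ᵀ
  have hCT : Cᵀ * W₁ = W₂ * B₂ᵀ := by
    rw [hCdef]
    simp only [Matrix.transpose_mul, Matrix.diagonal_transpose, hW₂T]
    simp only [Matrix.mul_assoc]
    rw [hGW, Matrix.mul_one]
  -- kernel characterization
  have hker : ∀ h : Fin E → ℝ,
      (B₁ᵀ * Matrix.diagonal g₀ * B₁ * W₁ + C * B₂ᵀ) *ᵥ h = 0 →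
      (B₁ * W₁) *ᵥ h = 0 ∧ B₂ᵀ *ᵥ h = 0 := by
    intro h hh
    have hz : h ⬝ᵥ (W₁ *ᵥ ((B₁ᵀ * Matrix.diagonal g₀ * B₁ * W₁ + C * B₂ᵀ) *ᵥ h)) = 0 := by
      rw [hh, Matrix.mulVec_zero, dotProduct_zero]
    have e : W₁ * (B₁ᵀ * Matrix.diagonal g₀ * B₁ * W₁ + C * B₂ᵀ)
        = (B₁ * W₁)ᵀ * Matrix.diagonal g₀ * (B₁ * W₁) + (B₂ᵀ)ᵀ * W₂ * B₂ᵀ := by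
      rw [Matrix.mul_add]
      congr 1
      · simp only [Matrix.transpose_mul, Matrix.diagonal_transpose, hW₁T, Matrix.mul_assoc]
      · rw [hCdef]
        simp only [Matrix.transpose_transpose]
        simp only [← Matrix.mul_assoc]
        rw [hWG, Matrix.one_mul]
    have hexp : h ⬝ᵥ (W₁ *ᵥ ((B₁ᵀ * Matrix.diagonal g₀ * B₁ * W₁ + C * B₂ᵀ) *ᵥ h))
        = ((B₁ * W₁) *ᵥ h) ⬝ᵥ (Matrix.diagonal g₀ *ᵥ ((B₁ * W₁) *ᵥ h))
          + (B₂ᵀ *ᵥ h) ⬝ᵥ (W₂ *ᵥ (B₂ᵀ *ᵥ h)) := by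
      rw [Matrix.mulVec_mulVec, e, Matrix.add_mulVec, dotProduct_add,
        dot_sandwich, dot_sandwich]
    rw [hexp] at hz
    have n1 : 0 ≤ ((B₁ * W₁) *ᵥ h) ⬝ᵥ (Matrix.diagonal g₀ *ᵥ ((B₁ * W₁) *ᵥ h)) :=
      dot_diag_nonneg (fun i => (hg₀ i).le) _
    have n2 : 0 ≤ (B₂ᵀ *ᵥ h) ⬝ᵥ (W₂ *ᵥ (B₂ᵀ *ᵥ h)) := by
      rw [hW₂]; exact dot_diag_nonneg (fun i => (hg₂' i).le) _
    constructor
    · exact dot_diag_eq_zero hg₀ (by linarith)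
    · have : (B₂ᵀ *ᵥ h) ⬝ᵥ (W₂ *ᵥ (B₂ᵀ *ᵥ h)) = 0 := by linarith
      rw [hW₂] at this
      exact dot_diag_eq_zero hg₂' this
  -- existence: two successive weighted least-squares projections
  obtain ⟨a, ha⟩ := exists_normalW B₁ᵀ (fun i => (g₁ i)⁻¹) hg₁' x
  simp only [Matrix.transpose_transpose, ← hW₁] at ha
  set x₁ : Fin E → ℝ := x - B₁ᵀ *ᵥ a with hx₁def
  have hAx₁ : (B₁ * W₁) *ᵥ x₁ = 0 := by
    rw [hx₁def, Matrix.mulVec_sub, Matrix.mulVec_mulVec, ha, sub_self]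
  obtain ⟨c, hc⟩ := exists_normalW C (fun i => (g₁ i)⁻¹) hg₁' x₁
  rw [← hW₁, hCT] at hc
  set xh : Fin E → ℝ := x₁ - C *ᵥ c with hxhdef
  have hCxh : (W₂ * B₂ᵀ) *ᵥ xh = 0 := by
    rw [hxhdef, Matrix.mulVec_sub, Matrix.mulVec_mulVec, hc, sub_self]
  have hB₂xh : B₂ᵀ *ᵥ xh = 0 := by
    rw [← Matrix.mulVec_mulVec, hW₂] at hCxh
    funext j
    have hj := congrFun hCxh j
    rw [Matrix.mulVec_diagonal] at hj
    have := (mul_eq_zero.mp hj).resolve_left (inv_ne_zero (hg₂ j).ne')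
    simpa using this
  have hAxh : (B₁ * W₁) *ᵥ xh = 0 := by
    rw [hxhdef, Matrix.mulVec_sub, hAx₁, Matrix.mulVec_mulVec, hAWC, Matrix.zero_mulVec,
      sub_self]
  have hLxh : (B₁ᵀ * Matrix.diagonal g₀ * B₁ * W₁ + C * B₂ᵀ) *ᵥ xh = 0 := by
    rw [Matrix.add_mulVec]
    have t1 : (B₁ᵀ * Matrix.diagonal g₀ * B₁ * W₁) *ᵥ xh = 0 := by
      rw [show B₁ᵀ * Matrix.diagonal g₀ * B₁ * W₁
          = B₁ᵀ * Matrix.diagonal g₀ * (B₁ * W₁) by simp only [Matrix.mul_assoc],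
        ← Matrix.mulVec_mulVec, hAxh, Matrix.mulVec_zero]
    have t2 : (C * B₂ᵀ) *ᵥ xh = 0 := by
      rw [← Matrix.mulVec_mulVec, hB₂xh, Matrix.mulVec_zero]
    rw [t1, t2, add_zero]
  have hdec : x = B₁ᵀ *ᵥ a + C *ᵥ c + xh := by
    rw [hxhdef, hx₁def]; abel
  refine ⟨a, c, xh, hLxh, hdec, ?_⟩
  -- uniqueness
  intro y0 y2 yh hLy hxy
  obtain ⟨hy1, hy2⟩ := hker yh hLy
  set u : Fin E → ℝ := B₁ᵀ *ᵥ y0 - B₁ᵀ *ᵥ a with hu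
  set v : Fin E → ℝ := C *ᵥ y2 - C *ᵥ c with hv
  set k : Fin E → ℝ := yh - xh with hk
  have hxx : B₁ᵀ *ᵥ y0 + C *ᵥ y2 + yh = B₁ᵀ *ᵥ a + C *ᵥ c + xh := by
    rw [← hxy, ← hdec]
  have hsum : u + v + k = 0 := by
    calc u + v + k
        = (B₁ᵀ *ᵥ y0 + C *ᵥ y2 + yh) - (B₁ᵀ *ᵥ a + C *ᵥ c + xh) := by
          rw [hu, hv, hk]; abel
      _ = 0 := sub_eq_zero.mpr hxx
  have hk1 : (B₁ * W₁) *ᵥ k = 0 := by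
    rw [hk, Matrix.mulVec_sub, hy1, hAxh, sub_self]
  have hk2 : B₂ᵀ *ᵥ k = 0 := by
    rw [hk, Matrix.mulVec_sub, hy2, hB₂xh, sub_self]
  have hu' : u = B₁ᵀ *ᵥ (y0 - a) := by rw [hu, Matrix.mulVec_sub]
  have hv' : v = C *ᵥ (y2 - c) := by rw [hv, Matrix.mulVec_sub]
  -- cross terms vanish
  have huv : u ⬝ᵥ (W₁ *ᵥ v) = 0 := by
    rw [hu', hv', dot_mulVec_left, Matrix.transpose_transpose, Matrix.mulVec_mulVec,
      Matrix.mulVec_mulVec, hAWC, Matrix.zero_mulVec,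
      dotProduct_zero]
  have huk : u ⬝ᵥ (W₁ *ᵥ k) = 0 := by
    rw [hu', dot_mulVec_left, Matrix.transpose_transpose, Matrix.mulVec_mulVec, hk1,
      dotProduct_zero]
  have hvk : v ⬝ᵥ (W₁ *ᵥ k) = 0 := by
    rw [hv', dot_mulVec_left, Matrix.mulVec_mulVec, hCT, ← Matrix.mulVec_mulVec, hk2,
      Matrix.mulVec_zero, dotProduct_zero]
  have hvu : v ⬝ᵥ (W₁ *ᵥ u) = 0 := by rw [hW₁, dot_diag_comm, ← hW₁]; exact huv
  have hku : k ⬝ᵥ (W₁ *ᵥ u) = 0 := by rw [hW₁, dot_diag_comm, ← hW₁]; exact huk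
  have hkv : k ⬝ᵥ (W₁ *ᵥ v) = 0 := by rw [hW₁, dot_diag_comm, ← hW₁]; exact hvk
  have h0 : (u + v + k) ⬝ᵥ (W₁ *ᵥ (u + v + k)) = 0 := by
    rw [hsum, Matrix.mulVec_zero, dotProduct_zero]
  simp only [Matrix.mulVec_add, dotProduct_add, add_dotProduct] at h0
  have nnu : 0 ≤ u ⬝ᵥ (W₁ *ᵥ u) := by rw [hW₁]; exact dot_diag_nonneg (fun i => (hg₁' i).le) u
  have nnv : 0 ≤ v ⬝ᵥ (W₁ *ᵥ v) := by rw [hW₁]; exact dot_diag_nonneg (fun i => (hg₁' i).le) v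
  have nnk : 0 ≤ k ⬝ᵥ (W₁ *ᵥ k) := by rw [hW₁]; exact dot_diag_nonneg (fun i => (hg₁' i).le) k
  have hu0 : u = 0 := by
    apply dot_diag_eq_zero hg₁'
    rw [← hW₁]; linarith
  have hv0 : v = 0 := by
    apply dot_diag_eq_zero hg₁'
    rw [← hW₁]; linarith
  have hk0 : k = 0 := by
    apply dot_diag_eq_zero hg₁'
    rw [← hW₁]; linarith
  refine ⟨sub_eq_zero.mp (hu ▸ hu0), sub_eq_zero.mp (hv ▸ hv0), sub_eq_zero.mp (hk ▸ hk0)⟩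
end
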